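/- Let σ₁ < σ₂ be real numbers, let q : ℝ → ℝ, and let u, v : ℝ → ℝ be twice differentiable functions satisfying u'' + q·u = 0 and v'' + q·v = 0 on (σ₁,σ₂), whose Wronskian u·v' − u'·v is equal to a constant W > 0 on (σ₁,σ₂). Assume moreover that q is differentiable (so that the expression below makes sense) and set p(t) = W/((u(t))² + (v(t))²). Then p satisfies Kummer's equation relative to q on (σ₁,σ₂): q(t) − (p(t))² − (1/2)·p''(t)/p(t) + (3/4)·(p'(t)/p(t))² = 0 for all t ∈ (σ₁,σ₂). -/

import Mathlib

/-!
With S = u² + v² we have p = W / S, and for any c ≠ 0 the Kummer expression of c / S equals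
q − c²/S² + S''/(2S) − S'²/(4S²). The equation gives S'' = 2(u'² + v'²) − 2qS, and with
S' = 2(uu' + vv') what remains is Lagrange's identity
(u² + v²)(u'² + v'²) = (uu' + vv')² + (uv' − u'v)², the last term being W².
-/

open Set Filter Topology

noncomputable def kummerOperator (q p : ℝ → ℝ) (t : ℝ) : ℝ :=
  q t - p t ^ 2 - 1 / 2 * (deriv (deriv p) t / p t) + 3 / 4 * (deriv p t / p t) ^ 2

section ConstDiv

variable {S S' : ℝ → ℝ} {t S'' c : ℝ}

theorem hasDerivAt_const_div (hS : HasDerivAt S (S' t) t) (hS0 : S t ≠ 0) :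
    HasDerivAt (fun s => c / S s) (-(c * S' t) / S t ^ 2) t :=
  ((hasDerivAt_const t c).fun_div hS hS0).congr_deriv (by ring)

theorem hasDerivAt_deriv_const_div (hS : ∀ᶠ s in 𝓝 t, HasDerivAt S (S' s) s)
    (hS0 : ∀ᶠ s in 𝓝 t, S s ≠ 0) (hS' : HasDerivAt S' S'' t) :
    HasDerivAt (deriv fun s => c / S s) (c * (2 * S' t ^ 2 - S t * S'') / S t ^ 3) t := by
  have hderiv : (deriv fun s => c / S s) =ᶠ[𝓝 t] fun s => -(c * S' s) / S s ^ 2 := by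
    filter_upwards [hS, hS0] with s hs hs0
    exact (hasDerivAt_const_div hs hs0).deriv
  have h0 := hS0.self_of_nhds
  refine HasDerivAt.congr_of_eventuallyEq ?_ hderiv
  refine ((hS'.const_mul c).fun_neg.fun_div (hS.self_of_nhds.fun_pow 2)
    (pow_ne_zero 2 h0)).congr_deriv ?_
  field_simp
  ring

theorem kummerOperator_const_div (q : ℝ → ℝ) (hc : c ≠ 0)
    (hS : ∀ᶠ s in 𝓝 t, HasDerivAt S (S' s) s)
    (hS0 : ∀ᶠ s in 𝓝 t, S s ≠ 0) (hS' : HasDerivAt S' S'' t) :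
    kummerOperator q (fun s => c / S s) t
      = q t - c ^ 2 / S t ^ 2 + S'' / (2 * S t) - S' t ^ 2 / (4 * S t ^ 2) := by
  have h0 := hS0.self_of_nhds
  rw [kummerOperator, (hasDerivAt_deriv_const_div hS hS0 hS').deriv,
    (hasDerivAt_const_div hS.self_of_nhds h0).deriv]
  field_simp
  ring

end ConstDiv

theorem sq_add_sq_ne_zero_of_wronskian_ne_zero {a b a' b' : ℝ} (h : a * b' - a' * b ≠ 0) :
    a ^ 2 + b ^ 2 ≠ 0 := by
  contrapose! h
  obtain ⟨rfl, rfl⟩ : a = 0 ∧ b = 0 := by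
    constructor <;> nlinarith [sq_nonneg a, sq_nonneg b]
  ring

theorem hasDerivAt_sq_add_sq {u v : ℝ → ℝ} {u' v' t : ℝ} (hu : HasDerivAt u u' t)
    (hv : HasDerivAt v v' t) :
    HasDerivAt (fun s => u s ^ 2 + v s ^ 2) (2 * (u t * u' + v t * v')) t :=
  ((hu.fun_pow 2).fun_add (hv.fun_pow 2)).congr_deriv (by ring)

theorem reciprocal_sum_of_squares_satisfies_kummer (σ₁ σ₂ : ℝ)
    (q u v : ℝ → ℝ)
    (hu : ∀ t ∈ Ioo σ₁ σ₂, DifferentiableAt ℝ u t ∧ DifferentiableAt ℝ (deriv u) t)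
    (hv : ∀ t ∈ Ioo σ₁ σ₂, DifferentiableAt ℝ v t ∧ DifferentiableAt ℝ (deriv v) t)
    (hueq : ∀ t ∈ Ioo σ₁ σ₂, deriv (deriv u) t + q t * u t = 0)
    (hveq : ∀ t ∈ Ioo σ₁ σ₂, deriv (deriv v) t + q t * v t = 0)
    (W : ℝ) (hW : 0 < W)
    (hwronsk : ∀ t ∈ Ioo σ₁ σ₂, u t * deriv v t - deriv u t * v t = W) :
    ∀ t ∈ Ioo σ₁ σ₂,
      q t - (W / ((u t) ^ 2 + (v t) ^ 2)) ^ 2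
        - (1 / 2) * (deriv (deriv (fun s => W / ((u s) ^ 2 + (v s) ^ 2))) t
            / (W / ((u t) ^ 2 + (v t) ^ 2)))
        + (3 / 4) * (deriv (fun s => W / ((u s) ^ 2 + (v s) ^ 2)) t
            / (W / ((u t) ^ 2 + (v t) ^ 2))) ^ 2 = 0 := by
  intro t ht
  have hS0 : ∀ s ∈ Ioo σ₁ σ₂, u s ^ 2 + v s ^ 2 ≠ 0 := fun s hs =>
    sq_add_sq_ne_zero_of_wronskian_ne_zero ((hwronsk s hs).trans_ne hW.ne')
  have hS : ∀ s ∈ Ioo σ₁ σ₂, HasDerivAt (fun s => u s ^ 2 + v s ^ 2)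
      (2 * (u s * deriv u s + v s * deriv v s)) s := fun s hs =>
    hasDerivAt_sq_add_sq (hu s hs).1.hasDerivAt (hv s hs).1.hasDerivAt
  have hS' : HasDerivAt (fun s => 2 * (u s * deriv u s + v s * deriv v s))
      (2 * (deriv u t ^ 2 + deriv v t ^ 2 + u t * deriv (deriv u) t + v t * deriv (deriv v) t)) t :=
    ((((hu t ht).1.hasDerivAt.fun_mul (hu t ht).2.hasDerivAt).fun_add
      ((hv t ht).1.hasDerivAt.fun_mul (hv t ht).2.hasDerivAt)).const_mul 2).congr_deriv (by ring)
  have hnhds := isOpen_Ioo.mem_nhds ht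
  change kummerOperator q (fun s => W / (u s ^ 2 + v s ^ 2)) t = 0
  rw [kummerOperator_const_div q hW.ne' (eventually_of_mem hnhds hS)
    (eventually_of_mem hnhds hS0) hS', eq_neg_of_add_eq_zero_left (hueq t ht),
    eq_neg_of_add_eq_zero_left (hveq t ht), ← hwronsk t ht]
  field_simp [hS0 t ht]
  ring
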